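/- The symmetrisation maps sym_• form a chain map from the singular chain complex C_•(X;ℝ) to itself, i.e., ∂ ∘ sym_n = sym_{n-1} ∘ ∂ for all n ≥ 1. -/

import Mathlib

/-!
Reindexing the sum over `π` by `π ↦ π * cycleRange j` turns each signed face `(-1)ʲ ∂ⱼ (sym σ)`
into `∂₀ (sym σ)`, so `∂ (sym σ) = (n + 2) ∂₀ (sym σ)`. On the other side, a permutation `π` of
`Fin (n + 2)` is the same as a pair `(j, ρ)` with `j = π 0` and `π ∘ succ = succAbove j ∘ ρ`, and
then `sign π = (-1)ʲ sign ρ`; this is the combinatorics of the Laplace expansion, and it collapses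
`sym (∂ σ) = Σⱼ (-1)ʲ sym (∂ⱼ σ)` to the same multiple of `∂₀ (sym σ)`.
-/

open Finset

noncomputable section SingularChains

/-- The affine map `Δ^k → Δ^n` extending the vertex map `π`. -/
def affMap {k n : ℕ} (π : Fin (k + 1) → Fin (n + 1)) :
    C(stdSimplex ℝ (Fin (k + 1)), stdSimplex ℝ (Fin (n + 1))) where
  toFun x := ⟨fun i => ∑ l ∈ Finset.univ.filter (fun l => π l = i), (x : Fin (k + 1) → ℝ) l, by
    constructor
    · intro i
      exact Finset.sum_nonneg fun l _ => x.2.1 l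
    · rw [← x.2.2]
      exact Finset.sum_fiberwise _ _ _⟩
  continuous_toFun := by
    apply Continuous.subtype_mk
    exact continuous_pi fun i =>
      continuous_finset_sum _ fun l _ => (continuous_apply l).comp continuous_subtype_val

variable {X : Type} [TopologicalSpace X]

/-- Singular `n`-simplices in `X`. -/
abbrev Sing (n : ℕ) (X : Type) [TopologicalSpace X] := C(stdSimplex ℝ (Fin (n + 1)), X)

/-- Singular `n`-chains with real coefficients. -/
abbrev Chain (n : ℕ) (X : Type) [TopologicalSpace X] := Sing n X →₀ ℝ

/-- The `j`-th face map `∂ⱼ : C_{n+1}(X;ℝ) → C_n(X;ℝ)`. -/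
def face {n : ℕ} (j : Fin (n + 2)) : Chain (n + 1) X →ₗ[ℝ] Chain n X :=
  Finsupp.lmapDomain ℝ ℝ fun σ => σ.comp (affMap (Fin.succAbove j))

/-- The singular boundary operator `∂ = Σⱼ (-1)ʲ ∂ⱼ`. -/
def bdry (n : ℕ) : Chain (n + 1) X →ₗ[ℝ] Chain n X :=
  ∑ j : Fin (n + 2), ((-1 : ℝ) ^ (j : ℕ)) • face j

/-- The symmetrisation of a singular simplex. -/
def symSimplex {n : ℕ} (σ : Sing n X) : Chain n X :=
  (((n + 1).factorial : ℝ))⁻¹ •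
    ∑ π : Equiv.Perm (Fin (n + 1)),
      ((Equiv.Perm.sign π : ℤ) : ℝ) • Finsupp.single (σ.comp (affMap π)) (1 : ℝ)

/-- The symmetrisation map `sym_n : C_n(X;ℝ) → C_n(X;ℝ)`. -/
def symCh (n : ℕ) : Chain n X →ₗ[ℝ] Chain n X :=
  Finsupp.lsum ℝ fun σ => LinearMap.toSpanSingleton ℝ _ (symSimplex σ)

/-- The ℓ¹-norm of a singular chain. -/
def l1 {n : ℕ} (c : Chain n X) : ℝ := ∑ σ ∈ c.support, |c σ|

/-- Cycles. -/
def cyc (X : Type) [TopologicalSpace X] : (n : ℕ) → Submodule ℝ (Chain n X)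
  | 0 => ⊤
  | n + 1 => LinearMap.ker (bdry n)

/-- Boundaries. -/
def bdries (X : Type) [TopologicalSpace X] (n : ℕ) : Submodule ℝ (Chain n X) :=
  LinearMap.range (bdry n)

/-- A chain is normalised if all but the last face map vanish on it. -/
def IsNormalised : {n : ℕ} → Chain n X → Prop
  | 0, _ => True
  | n + 1, c => ∀ j : Fin (n + 2), j ≠ Fin.last (n + 1) → face j c = 0

/-- The cyclic permutation `τⱼ = (j j-1 ⋯ 1 0)`. -/
def tau (n : ℕ) (j : Fin (n + 1)) : Equiv.Perm (Fin (n + 1)) := (Fin.cycleRange j)⁻¹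

end SingularChains

namespace Equiv.Perm

open Fin

lemma decomposeFin_fst {n : ℕ} (π : Perm (Fin (n + 1))) : (decomposeFin π).1 = π 0 := by
  simpa using (decomposeFin_symm_apply_zero (decomposeFin π).1 (decomposeFin π).2).symm

/-- `decomposeFin.symm (0, ρ)` is the permutation fixing `0` that acts as `ρ` on the successors. -/
def finSuccEquivSuccAbove (n : ℕ) : Fin (n + 1) × Perm (Fin n) ≃ Perm (Fin (n + 1)) where
  toFun p := (cycleRange p.1)⁻¹ * decomposeFin.symm (0, p.2)
  invFun π := (π 0, (decomposeFin (cycleRange (π 0) * π)).2)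
  left_inv := by
    rintro ⟨j, ρ⟩
    simp [← mul_assoc, cycleRange_symm_zero]
  right_inv π := by
    have hfix : (decomposeFin (cycleRange (π 0) * π)).1 = 0 := by
      simp [decomposeFin_fst, cycleRange_self]
    have hext : decomposeFin.symm (0, (decomposeFin (cycleRange (π 0) * π)).2) =
        cycleRange (π 0) * π := by
      generalize cycleRange (π 0) * π = q at hfix ⊢
      rw [← hfix, Prod.mk.eta, Equiv.symm_apply_apply]
    change (cycleRange (π 0))⁻¹ * decomposeFin.symm (0, _) = π
    rw [hext, inv_mul_cancel_left]

variable {n : ℕ}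

lemma finSuccEquivSuccAbove_comp_succ (j : Fin (n + 1)) (ρ : Perm (Fin n)) :
    ⇑(finSuccEquivSuccAbove n (j, ρ)) ∘ succ = j.succAbove ∘ ρ := by
  funext k
  simp [finSuccEquivSuccAbove, cycleRange_symm_succ]

lemma sign_finSuccEquivSuccAbove (j : Fin (n + 1)) (ρ : Perm (Fin n)) :
    sign (finSuccEquivSuccAbove n (j, ρ)) = (-1) ^ (j : ℕ) * sign ρ := by
  simp [finSuccEquivSuccAbove, sign_cycleRange]

section AlternatingSum

variable {R M : Type*} [Ring R] [AddCommGroup M] [Module R M]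

lemma sum_sign_smul_comp_succAbove (j : Fin (n + 1)) (F : (Fin n → Fin (n + 1)) → M) :
    ∑ π : Perm (Fin (n + 1)), ((sign π : ℤ) : R) • F (π ∘ j.succAbove) =
      (-1 : R) ^ (j : ℕ) • ∑ π : Perm (Fin (n + 1)), ((sign π : ℤ) : R) • F (π ∘ succ) := by
  rw [← Equiv.sum_comp (Equiv.mulRight (cycleRange j)), Finset.smul_sum]
  refine Finset.sum_congr rfl fun π _ => ?_
  have hcomp : ⇑(π * cycleRange j) ∘ j.succAbove = π ∘ succ := by
    funext k
    simp [cycleRange_succAbove]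
  simp only [coe_mulRight, hcomp, sign_mul, sign_cycleRange, smul_smul]
  push_cast
  rw [((Commute.neg_one_left _).pow_left _).eq]

lemma sum_sign_smul_comp_succ (F : (Fin n → Fin (n + 1)) → M) :
    ∑ π : Perm (Fin (n + 1)), ((sign π : ℤ) : R) • F (π ∘ succ) =
      ∑ j : Fin (n + 1), (-1 : R) ^ (j : ℕ) •
        ∑ ρ : Perm (Fin n), ((sign ρ : ℤ) : R) • F (j.succAbove ∘ ρ) := by
  rw [← (finSuccEquivSuccAbove n).sum_comp, Fintype.sum_prod_type]
  refine Finset.sum_congr rfl fun j _ => ?_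
  simp [Finset.smul_sum, finSuccEquivSuccAbove_comp_succ, sign_finSuccEquivSuccAbove, smul_smul]

end AlternatingSum

end Equiv.Perm

open Equiv Equiv.Perm

section SymmetrisationChainMap

variable {X : Type} [TopologicalSpace X]

lemma affMap_comp {k m n : ℕ} (f : Fin (m + 1) → Fin (n + 1)) (g : Fin (k + 1) → Fin (m + 1)) :
    (affMap f).comp (affMap g) = affMap (f ∘ g) := by
  ext x i
  change ∑ l ∈ univ.filter (fun l => f l = i), ∑ t ∈ univ.filter (fun t => g t = l),
      (x : Fin (k + 1) → ℝ) t = ∑ t ∈ univ.filter (fun t => f (g t) = i), (x : Fin (k + 1) → ℝ) t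
  rw [Finset.sum_fiberwise_eq_sum_filter]
  congr 1
  ext t
  simp

lemma comp_affMap_comp_affMap {k m n : ℕ} (σ : Sing n X) (f : Fin (m + 1) → Fin (n + 1))
    (g : Fin (k + 1) → Fin (m + 1)) :
    (σ.comp (affMap f)).comp (affMap g) = σ.comp (affMap (f ∘ g)) := by
  rw [ContinuousMap.comp_assoc, affMap_comp]

lemma face_single {n : ℕ} (j : Fin (n + 2)) (τ : Sing (n + 1) X) (b : ℝ) :
    face j (Finsupp.single τ b) = Finsupp.single (τ.comp (affMap j.succAbove)) b := by
  simp [face]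

lemma bdry_apply {n : ℕ} (c : Chain (n + 1) X) :
    bdry n c = ∑ j : Fin (n + 2), (-1 : ℝ) ^ (j : ℕ) • face j c := by
  simp [bdry]

lemma symCh_single {n : ℕ} (τ : Sing n X) (b : ℝ) :
    symCh n (Finsupp.single τ b) = b • symSimplex τ := by
  simp [symCh]

lemma symSimplex_comp_affMap {m n : ℕ} (σ : Sing m X) (f : Fin (n + 1) → Fin (m + 1)) :
    symSimplex (σ.comp (affMap f)) = ((n + 1).factorial : ℝ)⁻¹ •
      ∑ π : Perm (Fin (n + 1)),
        ((sign π : ℤ) : ℝ) • Finsupp.single (σ.comp (affMap (f ∘ π))) (1 : ℝ) := by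
  simp only [symSimplex, comp_affMap_comp_affMap]

lemma face_symSimplex {n : ℕ} (σ : Sing (n + 1) X) (j : Fin (n + 2)) :
    face j (symSimplex σ) = ((n + 2).factorial : ℝ)⁻¹ •
      ∑ π : Perm (Fin (n + 2)),
        ((sign π : ℤ) : ℝ) • Finsupp.single (σ.comp (affMap (π ∘ j.succAbove))) (1 : ℝ) := by
  simp only [symSimplex, map_smul, map_sum, face_single, comp_affMap_comp_affMap]

lemma face_symSimplex_eq_neg_one_pow_smul {n : ℕ} (σ : Sing (n + 1) X) (j : Fin (n + 2)) :
    face j (symSimplex σ) = (-1 : ℝ) ^ (j : ℕ) • face 0 (symSimplex σ) := by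
  rw [face_symSimplex, face_symSimplex, Fin.succAbove_zero,
    sum_sign_smul_comp_succAbove (F := fun f => Finsupp.single (σ.comp (affMap f)) (1 : ℝ)),
    smul_comm]

lemma bdry_symSimplex {n : ℕ} (σ : Sing (n + 1) X) :
    bdry n (symSimplex σ) = ((n + 2 : ℕ) : ℝ) • face 0 (symSimplex σ) := by
  have hterm (j : Fin (n + 2)) :
      (-1 : ℝ) ^ (j : ℕ) • face j (symSimplex σ) = face 0 (symSimplex σ) := by
    rw [face_symSimplex_eq_neg_one_pow_smul, smul_smul, ← mul_pow, neg_one_mul, neg_neg, one_pow,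
      one_smul]
  simp only [bdry_apply, hterm, Finset.sum_const, Finset.card_univ, Fintype.card_fin,
    Nat.cast_smul_eq_nsmul]

lemma symCh_bdry_single {n : ℕ} (σ : Sing (n + 1) X) :
    symCh n (bdry n (Finsupp.single σ 1)) = ((n + 2 : ℕ) : ℝ) • face 0 (symSimplex σ) := by
  have hfact : ((n + 2 : ℕ) : ℝ) * ((n + 2).factorial : ℝ)⁻¹ = ((n + 1).factorial : ℝ)⁻¹ := by
    rw [Nat.factorial_succ (n + 1), Nat.cast_mul, mul_inv, mul_inv_cancel_left₀ (by positivity)]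
  simp only [bdry_apply, map_sum, map_smul, face_single, symCh_single, one_smul,
    symSimplex_comp_affMap]
  rw [face_symSimplex, Fin.succAbove_zero,
    sum_sign_smul_comp_succ (F := fun f => Finsupp.single (σ.comp (affMap f)) (1 : ℝ)),
    smul_smul, hfact, Finset.smul_sum]
  simp only [smul_comm _ ((n + 1).factorial : ℝ)⁻¹]

end SymmetrisationChainMap

/-- Symmetrisation is a chain map: `∂ ∘ sym_{n+1} = sym_n ∘ ∂`. -/
theorem bdry_comp_symm (X : Type) [TopologicalSpace X] (n : ℕ) :
    (bdry n (X := X)).comp (symCh (n + 1)) = (symCh n).comp (bdry n) := by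
  refine Finsupp.lhom_ext' fun σ => LinearMap.ext_ring ?_
  simp only [LinearMap.comp_apply, Finsupp.lsingle_apply, symCh_single, one_smul]
  rw [bdry_symSimplex, symCh_bdry_single]
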